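/- arXiv:2302.04653 — 2 statements merged into one kernel-verified Lean document; each statement's English description precedes it below -/
import Mathlib

section
/- (Sewing lemma) Let $W$ be a Banach space, $0 < \alpha \leq 1 < \beta$, and let $\Xi$ be a function on the simplex $\{0 \le s \le t \le T\}$ with values in $W$ satisfying $\Xi_{t,t} = 0$, $\|\Xi\|_{\alpha} < \infty$ and $\|\delta\Xi\|_{\beta} < \infty$, where $\delta\Xi_{s,u,t} = \Xi_{s,t} - \Xi_{s,u} - \Xi_{u,t}$. Then there exists a unique $\alpha$-Hölder path $\mathcal{I}\Xi : [0,T] \to W$ with $(\mathcal{I}\Xi)_0 = 0$ such that $|(\mathcal{I}\Xi)_t - (\mathcal{I}\Xi)_s - \Xi_{s,t}| \leq \|\delta\Xi\|_{\beta}\,[2^{\beta}(\zeta(\beta)-1)+1]\,|t-s|^{\beta}$ for all $s \le t$. Moreover, $(\mathcal{I}\Xi)_t - (\mathcal{I}\Xi)_s = \lim_{|\mathcal{P}| \to 0} \sum_{[u,v] \in \mathcal{P}} \Xi_{u,v}$ where the limit is over partitions $\mathcal{P}$ of $[s,t]$ with mesh size tending to $0$. -/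
/-!
The sewing map is the limit of the Riemann sums `∑ Ξ_{u,v}` along the dyadic partitions of
`[s,t]`. Halving every interval of the level-`m` partition changes the sum by `2^m` defects
`δΞ`, each of norm at most `‖δΞ‖_β ((t-s)/2^m)^β`, so the sums converge geometrically with
ratio `2^(1-β)`; summing the series gives the sewing bound, and Cauchy condensation gives
`(1 - 2^(1-β))⁻¹ ≤ 2^β (ζ(β) - 1)`.

To compare arbitrary partitions we use Young's point-removal argument: a partition with `N`
intervals has an interior point whose two neighbours are at distance at most `2(t-s)/(N-1)`,
and removing points one at a time bounds `‖∑ Ξ_{u,v} - Ξ_{s,t}‖` by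
`2^β ζ(β) ‖δΞ‖_β (t-s)^β`. Applied on the blocks of a common refinement, this shows that the
Riemann sum of any partition differs from the sewing map by `O(∑ |v-u|^β)`, which gives both
the additivity of the sewing map and the convergence of Riemann sums as the mesh tends to `0`.
The difference of two paths satisfying the sewing bound has increments `O(|t-s|^β)` with
`β > 1`, hence is constant.
-/

open Filter Finset Topology

noncomputable section

section Partition

variable {M : Type*}

def riemannSum [AddCommMonoid M] (G : ℝ → ℝ → M) (τ : ℕ → ℝ) (N : ℕ) : M :=
  ∑ i ∈ range N, G (τ i) (τ (i + 1))

def removePoint (τ : ℕ → ℝ) (k : ℕ) : ℕ → ℝ := fun i => if i < k then τ i else τ (i + 1)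

def concatSeq (τ σ : ℕ → ℝ) (n : ℕ) : ℕ → ℝ := fun i => if i ≤ n then τ i else σ (i - n)

section Monoid

variable [AddCommMonoid M] (G : ℝ → ℝ → M)

theorem riemannSum_congr {τ τ' : ℕ → ℝ} {N : ℕ} (h : ∀ i ≤ N, τ i = τ' i) :
    riemannSum G τ N = riemannSum G τ' N :=
  sum_congr rfl fun i hi => by
    rw [mem_range] at hi
    rw [h i hi.le, h (i + 1) hi]

theorem riemannSum_add (τ : ℕ → ℝ) (n k : ℕ) :
    riemannSum G τ (n + k) = riemannSum G τ n + riemannSum G (fun i => τ (n + i)) k := by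
  simp only [riemannSum, sum_range_add, add_assoc]

theorem riemannSum_eq_sum_blocks (ρ : ℕ → ℝ) {φ : ℕ → ℕ} (hφ0 : φ 0 = 0) {N : ℕ}
    (hφ : ∀ j < N, φ j ≤ φ (j + 1)) :
    riemannSum G ρ (φ N) =
      ∑ j ∈ range N, riemannSum G (fun i => ρ (φ j + i)) (φ (j + 1) - φ j) := by
  induction N with
  | zero => simp [hφ0, riemannSum]
  | succ N ih =>
    rw [sum_range_succ, ← ih fun j hj => hφ j (by omega), ← riemannSum_add,
      Nat.add_sub_cancel' (hφ N N.lt_succ_self)]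

theorem riemannSum_two_mul (τ : ℕ → ℝ) (n : ℕ) :
    riemannSum G τ (2 * n) =
      ∑ i ∈ range n, (G (τ (2 * i)) (τ (2 * i + 1)) + G (τ (2 * i + 1)) (τ (2 * i + 2))) := by
  rw [riemannSum_eq_sum_blocks G τ (φ := (2 * ·)) rfl fun j _ => by omega]
  refine sum_congr rfl fun i _ => ?_
  simp [riemannSum, sum_range_succ, show 2 * (i + 1) - 2 * i = 2 by omega]

theorem riemannSum_concatSeq {τ σ : ℕ → ℝ} {n : ℕ} (h : τ n = σ 0) (k : ℕ) :
    riemannSum G (concatSeq τ σ n) (n + k) = riemannSum G τ n + riemannSum G σ k := by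
  have hσ : (fun i => concatSeq τ σ n (n + i)) = σ := by
    funext i
    rcases i with _ | i
    · simp [concatSeq, h]
    · simp [concatSeq]
  rw [riemannSum_add, hσ, riemannSum_congr G (τ := concatSeq τ σ n) (τ' := τ) fun i hi => if_pos hi]

theorem strictMonoOn_concatSeq {τ σ : ℕ → ℝ} {n k : ℕ} (hτ : StrictMonoOn τ (Set.Iic n))
    (hσ : StrictMonoOn σ (Set.Iic k)) (h : τ n = σ 0) :
    StrictMonoOn (concatSeq τ σ n) (Set.Iic (n + k)) := by
  intro i hi j hj hij
  simp only [Set.mem_Iic] at hi hj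
  simp only [concatSeq]
  split_ifs with hin hjn hjn
  · exact hτ (Set.mem_Iic.2 hin) (Set.mem_Iic.2 hjn) hij
  · calc τ i ≤ τ n := hτ.monotoneOn (Set.mem_Iic.2 hin) (Set.mem_Iic.2 le_rfl) hin
      _ = σ 0 := h
      _ < σ (j - n) := hσ (Set.mem_Iic.2 (Nat.zero_le k)) (Set.mem_Iic.2 (by omega)) (by omega)
  · omega
  · exact hσ (Set.mem_Iic.2 (by omega)) (Set.mem_Iic.2 (by omega)) (by omega)

end Monoid

theorem riemannSum_removePoint [AddCommGroup M] (G : ℝ → ℝ → M) (τ : ℕ → ℝ) {k n : ℕ}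
    (hk : k < n) :
    riemannSum G τ (n + 1) = riemannSum G (removePoint τ (k + 1)) n +
      (G (τ k) (τ (k + 1)) + G (τ (k + 1)) (τ (k + 2)) - G (τ k) (τ (k + 2))) := by
  obtain ⟨m, rfl⟩ := Nat.exists_eq_add_of_lt hk
  have hshift : (fun i => removePoint τ (k + 1) (k + 1 + i)) = fun i => τ (k + 2 + i) := by
    funext i
    simp only [removePoint, if_neg (show ¬ k + 1 + i < k + 1 by omega)]
    congr 1
    omega
  have hhead : riemannSum G (removePoint τ (k + 1)) k = riemannSum G τ k :=
    riemannSum_congr G fun i hi => if_pos (by omega)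
  rw [show k + m + 1 + 1 = k + 2 + m by omega, show k + m + 1 = k + 1 + m by omega,
    riemannSum_add, riemannSum_add G (removePoint τ (k + 1)), hshift]
  simp only [riemannSum, sum_range_succ] at hhead ⊢
  simp only [removePoint, if_pos (show k < k + 1 by omega), lt_irrefl, if_false] at hhead ⊢
  rw [hhead]
  abel

theorem strictMonoOn_removePoint {τ : ℕ → ℝ} {n k : ℕ} (hτ : StrictMonoOn τ (Set.Iic (n + 1))) :
    StrictMonoOn (removePoint τ k) (Set.Iic n) := by
  intro i hi j hj hij
  simp only [Set.mem_Iic] at hi hj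
  simp only [removePoint]
  split_ifs <;> exact hτ (Set.mem_Iic.2 (by omega)) (Set.mem_Iic.2 (by omega)) (by omega)

theorem exists_sub_le_of_monotoneOn {τ : ℕ → ℝ} {n : ℕ} (hτ : MonotoneOn τ (Set.Iic (n + 1)))
    (hn : 0 < n) : ∃ k < n, τ (k + 2) - τ k ≤ 2 * (τ (n + 1) - τ 0) / n := by
  have hsum : ∑ k ∈ range n, (τ (k + 2) - τ k) = τ (n + 1) - τ 1 + (τ n - τ 0) := by
    rw [← sum_range_sub (fun k => τ (k + 1)), ← sum_range_sub τ, ← sum_add_distrib]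
    exact sum_congr rfl fun k _ => by ring
  have h1 : τ 0 ≤ τ 1 := hτ (by simp) (by simp) (by omega)
  have h2 : τ n ≤ τ (n + 1) := hτ (by simp) (by simp) (by omega)
  obtain ⟨k, hk, hle⟩ := exists_le_of_sum_le (nonempty_range_iff.2 hn.ne')
    (g := fun _ => 2 * (τ (n + 1) - τ 0) / n) (by
      rw [hsum, sum_const, card_range, nsmul_eq_mul]
      field_simp
      linarith)
  exact ⟨k, mem_range.1 hk, hle⟩

theorem exists_common_refinement {τ σ : ℕ → ℝ} {N M : ℕ} (hτ : StrictMonoOn τ (Set.Iic N))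
    (hσ : StrictMonoOn σ (Set.Iic M)) (h0 : τ 0 = σ 0) (hN : τ N = σ M) :
    ∃ P ρ, StrictMonoOn ρ (Set.Iic P) ∧ ρ 0 = τ 0 ∧ ρ P = τ N ∧
      (∀ j ≤ N, ∃ i ≤ P, ρ i = τ j) ∧ (∀ j ≤ M, ∃ i ≤ P, ρ i = σ j) := by
  classical
  set S : Finset ℝ := (range (N + 1)).image τ ∪ (range (M + 1)).image σ
  have hS : ∀ x ∈ S, τ 0 ≤ x ∧ x ≤ τ N := by
    intro x hx
    simp only [S, mem_union, mem_image, mem_range] at hx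
    rcases hx with ⟨j, hj, rfl⟩ | ⟨j, hj, rfl⟩
    · exact ⟨hτ.monotoneOn (by simp) (Set.mem_Iic.2 (by omega)) (Nat.zero_le j),
        hτ.monotoneOn (Set.mem_Iic.2 (by omega)) (by simp) (by omega)⟩
    · rw [h0, hN]
      exact ⟨hσ.monotoneOn (by simp) (Set.mem_Iic.2 (by omega)) (Nat.zero_le j),
        hσ.monotoneOn (Set.mem_Iic.2 (by omega)) (by simp) (by omega)⟩
  have hτS : ∀ j ≤ N, τ j ∈ S := fun j hj =>
    mem_union_left _ (mem_image_of_mem τ (mem_range.2 (by omega)))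
  have hσS : ∀ j ≤ M, σ j ∈ S := fun j hj =>
    mem_union_right _ (mem_image_of_mem σ (mem_range.2 (by omega)))
  have hk : 0 < S.card := card_pos.2 ⟨τ 0, hτS 0 (Nat.zero_le N)⟩
  set e := S.orderEmbOfFin rfl
  set ρ : ℕ → ℝ := fun i => e ⟨min i (S.card - 1), by omega⟩
  have hρS : ∀ x ∈ S, ∃ i ≤ S.card - 1, ρ i = x := by
    intro x hx
    obtain ⟨i, rfl⟩ : x ∈ Set.range e := by rw [range_orderEmbOfFin]; exact hx
    exact ⟨i, by omega, by simp [ρ, min_eq_left (by omega : (i : ℕ) ≤ S.card - 1)]⟩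
  have hρ : StrictMonoOn ρ (Set.Iic (S.card - 1)) := fun i hi j hj hij => by
    simp only [ρ, min_eq_left (Set.mem_Iic.1 hi), min_eq_left (Set.mem_Iic.1 hj)]
    exact e.strictMono hij
  refine ⟨S.card - 1, ρ, hρ, ?_, ?_, fun j hj => hρS _ (hτS j hj), fun j hj => hρS _ (hσS j hj)⟩
  · obtain ⟨i, hi, hρi⟩ := hρS _ (hτS 0 (Nat.zero_le N))
    refine le_antisymm ?_ (hS _ (orderEmbOfFin_mem S rfl _)).1
    rw [← hρi]
    exact hρ.monotoneOn (by simp) (Set.mem_Iic.2 hi) (Nat.zero_le i)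
  · obtain ⟨i, hi, hρi⟩ := hρS _ (hτS N le_rfl)
    refine le_antisymm (hS _ (orderEmbOfFin_mem S rfl _)).2 ?_
    rw [← hρi]
    exact hρ.monotoneOn (Set.mem_Iic.2 hi) (by simp) hi

theorem riemannSum_rpow_le_of_mesh {τ : ℕ → ℝ} {N : ℕ} {β δ : ℝ} (hβ : 1 ≤ β)
    (hτ : MonotoneOn τ (Set.Iic N)) (hmesh : ∀ i < N, τ (i + 1) - τ i ≤ δ) :
    riemannSum (fun u v => (v - u) ^ β) τ N ≤ δ ^ (β - 1) * (τ N - τ 0) := by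
  rw [← sum_range_sub τ, mul_sum]
  refine sum_le_sum fun i hi => ?_
  rw [mem_range] at hi
  have hstep : 0 ≤ τ (i + 1) - τ i :=
    sub_nonneg.2 (hτ (Set.mem_Iic.2 hi.le) (Set.mem_Iic.2 hi) i.le_succ)
  calc (τ (i + 1) - τ i) ^ β = (τ (i + 1) - τ i) ^ (β - 1) * (τ (i + 1) - τ i) := by
        rw [← Real.rpow_add_one' hstep (by linarith), sub_add_cancel]
    _ ≤ δ ^ (β - 1) * (τ (i + 1) - τ i) := by
        gcongr
        exact hmesh i hi

end Partition

section Dyadic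

def dyadicPartition (s t : ℝ) (m : ℕ) : ℕ → ℝ := fun i => s + i * ((t - s) / 2 ^ m)

variable {s t : ℝ} {m : ℕ}

@[simp]
theorem dyadicPartition_zero : dyadicPartition s t m 0 = s := by simp [dyadicPartition]

@[simp]
theorem dyadicPartition_two_pow : dyadicPartition s t m (2 ^ m) = t := by
  simp only [dyadicPartition]
  push_cast
  field_simp
  ring

theorem dyadicPartition_succ_two_mul (i : ℕ) :
    dyadicPartition s t (m + 1) (2 * i) = dyadicPartition s t m i := by
  simp only [dyadicPartition, pow_succ]
  push_cast
  field_simp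

theorem dyadicPartition_add_one_sub (i : ℕ) :
    dyadicPartition s t m (i + 1) - dyadicPartition s t m i = (t - s) / 2 ^ m := by
  simp only [dyadicPartition]
  push_cast
  ring

theorem monotone_dyadicPartition (hst : s ≤ t) : Monotone (dyadicPartition s t m) :=
  monotone_nat_of_le_succ fun i => by
    linarith [dyadicPartition_add_one_sub (s := s) (t := t) (m := m) i,
      div_nonneg (sub_nonneg.2 hst) (pow_nonneg zero_le_two m)]

theorem strictMono_dyadicPartition (hst : s < t) : StrictMono (dyadicPartition s t m) :=
  strictMono_nat_of_lt_succ fun i => by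
    linarith [dyadicPartition_add_one_sub (s := s) (t := t) (m := m) i,
      div_pos (sub_pos.2 hst) (pow_pos zero_lt_two m)]

theorem dyadicPartition_mem_Icc (hst : s ≤ t) {i : ℕ} (hi : i ≤ 2 ^ m) :
    dyadicPartition s t m i ∈ Set.Icc s t := by
  constructor
  · simpa using monotone_dyadicPartition (m := m) hst (Nat.zero_le i)
  · simpa using monotone_dyadicPartition (m := m) hst hi

theorem riemannSum_dyadicPartition_zero {M : Type*} [AddCommMonoid M] (G : ℝ → ℝ → M) :
    riemannSum G (dyadicPartition s t 0) (2 ^ 0) = G s t := by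
  simp [riemannSum, dyadicPartition]

theorem riemannSum_rpow_dyadicPartition (β : ℝ) (hst : s ≤ t) :
    riemannSum (fun u v => (v - u) ^ β) (dyadicPartition s t m) (2 ^ m) =
      (t - s) ^ β * ((2 : ℝ) ^ (1 - β)) ^ m := by
  have h2 : ((2 : ℝ) ^ m) ^ β = ((2 : ℝ) ^ β) ^ m := by
    rw [← Real.rpow_natCast, ← Real.rpow_mul zero_le_two, mul_comm, Real.rpow_mul zero_le_two,
      Real.rpow_natCast]
  simp only [riemannSum, dyadicPartition_add_one_sub, sum_const, card_range, nsmul_eq_mul]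
  rw [Real.div_rpow (sub_nonneg.2 hst) (by positivity), Real.rpow_sub zero_lt_two, Real.rpow_one,
    div_pow, h2]
  push_cast
  ring

end Dyadic

section Constants

variable {β : ℝ}

theorem two_rpow_one_sub_lt_one (hβ : 1 < β) : (2 : ℝ) ^ (1 - β) < 1 :=
  Real.rpow_lt_one_of_one_lt_of_neg one_lt_two (by linarith)

theorem summable_add_one_rpow_neg (hβ : 1 < β) :
    Summable fun n : ℕ => ((n : ℝ) + 1) ^ (-β) := by
  have := (summable_nat_add_iff 1).2 (Real.summable_nat_rpow.2 (by linarith : -β < -1))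
  simpa using this

theorem one_le_tsum_add_one_rpow_neg (hβ : 1 < β) : 1 ≤ ∑' n : ℕ, ((n : ℝ) + 1) ^ (-β) := by
  simpa using (summable_add_one_rpow_neg hβ).sum_le_tsum (range 1) fun _ _ => by positivity

theorem sum_Ico_two_rpow_neg_le (hβ : 1 < β) (M : ℕ) :
    ∑ k ∈ Ico (2 : ℕ) M, ((k : ℕ) : ℝ) ^ (-β) ≤ (∑' n : ℕ, ((n : ℝ) + 1) ^ (-β)) - 1 := by
  have hsum₂ : Summable fun n : ℕ => ((n : ℝ) + 2) ^ (-β) := by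
    have := (summable_nat_add_iff 2).2 (Real.summable_nat_rpow.2 (by linarith : -β < -1))
    simpa using this
  have htail : (∑' n : ℕ, ((n : ℝ) + 1) ^ (-β)) - 1 = ∑' n : ℕ, ((n : ℝ) + 2) ^ (-β) := by
    rw [(summable_add_one_rpow_neg hβ).tsum_eq_zero_add]
    norm_num [add_assoc, one_add_one_eq_two]
  rw [htail, sum_Ico_eq_sum_range]
  refine le_of_eq_of_le (sum_congr rfl fun k _ => ?_) (hsum₂.sum_le_tsum _ fun _ _ => by positivity)
  push_cast
  ring_nf

theorem sum_range_two_rpow_one_sub_pow_le (hβ : 1 < β) (n : ℕ) :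
    ∑ k ∈ range n, ((2 : ℝ) ^ (1 - β)) ^ k ≤
      2 ^ β * ∑ k ∈ Ico (2 : ℕ) (2 ^ n + 1), ((k : ℕ) : ℝ) ^ (-β) := by
  have hcond := sum_condensed_le' (f := fun k : ℕ => (k : ℝ) ^ (-β))
    (fun m k hm hmk => Real.rpow_le_rpow_of_nonpos (by positivity) (by exact_mod_cast hmk)
      (by linarith)) n
  refine le_of_eq_of_le ?_ (mul_le_mul_of_nonneg_left hcond (by positivity))
  rw [mul_sum]
  refine sum_congr rfl fun k _ => ?_
  rw [nsmul_eq_mul, Nat.cast_pow, Nat.cast_pow, Nat.cast_ofNat, ← Real.rpow_natCast 2 (k + 1),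
    ← Real.rpow_mul zero_le_two, ← Real.rpow_natCast 2 k, ← Real.rpow_mul_natCast zero_le_two,
    ← Real.rpow_add two_pos, ← Real.rpow_add two_pos]
  congr 1
  push_cast
  ring

theorem inv_one_sub_two_rpow_le (hβ : 1 < β) :
    (1 - (2 : ℝ) ^ (1 - β))⁻¹ ≤ 2 ^ β * ((∑' n : ℕ, ((n : ℝ) + 1) ^ (-β)) - 1) := by
  rw [← tsum_geometric_of_lt_one (by positivity) (two_rpow_one_sub_lt_one hβ)]
  refine Real.tsum_le_of_sum_range_le (fun n => by positivity) fun n =>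
    (sum_range_two_rpow_one_sub_pow_le hβ n).trans ?_
  gcongr
  exact sum_Ico_two_rpow_neg_le hβ _

theorem rpow_le_rpow_sub_mul_rpow {x T α : ℝ} (hx : 0 ≤ x) (hxT : x ≤ T) (hαβ : α ≤ β)
    (hβ : 0 < β) : x ^ β ≤ T ^ (β - α) * x ^ α := by
  calc x ^ β = x ^ (β - α + α) := by rw [sub_add_cancel]
    _ = x ^ (β - α) * x ^ α := Real.rpow_add' hx (by rw [sub_add_cancel]; exact hβ.ne')
    _ ≤ T ^ (β - α) * x ^ α := by gcongr

theorem exists_pos_mul_rpow_lt (c : ℝ) {γ ε : ℝ} (hγ : 0 < γ) (hε : 0 < ε) :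
    ∃ δ > 0, c * δ ^ γ < ε := by
  have h : Tendsto (fun δ : ℝ => c * δ ^ γ) (𝓝[>] 0) (𝓝 0) := by
    have := (Real.continuousAt_rpow_const 0 γ (Or.inr hγ.le)).tendsto.const_mul c
    rw [Real.zero_rpow hγ.ne', mul_zero] at this
    exact this.mono_left nhdsWithin_le_nhds
  obtain ⟨δ, hδ, hpos⟩ := ((h.eventually (gt_mem_nhds hε)).and self_mem_nhdsWithin).exists
  exact ⟨δ, hpos, hδ⟩

end Constants

section Defect

variable {W : Type*} [NormedAddCommGroup W] {Ξ : ℝ → ℝ → W} {C β : ℝ}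

def HasDefectBound (Ξ : ℝ → ℝ → W) (C β a b : ℝ) : Prop :=
  ∀ s u t, a ≤ s → s ≤ u → u ≤ t → t ≤ b → ‖Ξ s t - Ξ s u - Ξ u t‖ ≤ C * (t - s) ^ β

namespace HasDefectBound

variable {a b : ℝ}

theorem mono (h : HasDefectBound Ξ C β a b) {a' b' : ℝ} (ha : a ≤ a') (hb : b' ≤ b) :
    HasDefectBound Ξ C β a' b' :=
  fun s u t hs hsu hut ht => h s u t (ha.trans hs) hsu hut (ht.trans hb)

theorem norm_add_sub_le (h : HasDefectBound Ξ C β a b) {s u t : ℝ} (hs : a ≤ s) (hsu : s ≤ u)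
    (hut : u ≤ t) (ht : t ≤ b) : ‖Ξ s u + Ξ u t - Ξ s t‖ ≤ C * (t - s) ^ β := by
  rw [← norm_neg, neg_sub, sub_add_eq_sub_sub]
  exact h s u t hs hsu hut ht

theorem mul_rpow_nonneg (h : HasDefectBound Ξ C β a b) (hab : a ≤ b) : 0 ≤ C * (b - a) ^ β :=
  (norm_nonneg _).trans (h a a b le_rfl le_rfl hab le_rfl)

theorem nonneg (h : HasDefectBound Ξ C β a b) (hab : a < b) : 0 ≤ C :=
  (mul_nonneg_iff_of_pos_right (Real.rpow_pos_of_pos (sub_pos.2 hab) β)).1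
    (h.mul_rpow_nonneg hab.le)

theorem apply_self (h : HasDefectBound Ξ C β a b) (hβ : β ≠ 0) {s : ℝ} (ha : a ≤ s)
    (hb : s ≤ b) : Ξ s s = 0 := by
  have := h s s s ha le_rfl le_rfl hb
  rwa [sub_self, zero_sub, norm_neg, sub_self, Real.zero_rpow hβ, mul_zero,
    norm_le_zero_iff] at this

end HasDefectBound

theorem norm_riemannSum_sub_le_sum (hβ : 0 ≤ β) {N : ℕ} {τ : ℕ → ℝ}
    (hτ : StrictMonoOn τ (Set.Iic (N + 1))) (hΞ : HasDefectBound Ξ C β (τ 0) (τ (N + 1))) :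
    ‖riemannSum Ξ τ (N + 1) - Ξ (τ 0) (τ (N + 1))‖ ≤
      C * 2 ^ β * (∑ k ∈ range N, ((k : ℝ) + 1) ^ (-β)) * (τ (N + 1) - τ 0) ^ β := by
  induction N generalizing τ with
  | zero => simp [riemannSum]
  | succ N ih =>
    have hmono : ∀ i j, i ≤ j → j ≤ N + 2 → τ i ≤ τ j := fun i j hij hj =>
      hτ.monotoneOn (Set.mem_Iic.2 (by omega)) (Set.mem_Iic.2 hj) hij
    set L := τ (N + 2) - τ 0
    obtain ⟨k, hk, hgap⟩ := exists_sub_le_of_monotoneOn hτ.monotoneOn (Nat.succ_pos N)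
    have h0 : removePoint τ (k + 1) 0 = τ 0 := if_pos k.succ_pos
    have hlast : removePoint τ (k + 1) (N + 1) = τ (N + 2) := if_neg (by omega)
    have hrec := ih (strictMonoOn_removePoint hτ) (by rw [h0, hlast]; exact hΞ)
    rw [h0, hlast] at hrec
    have hC : 0 ≤ C := hΞ.nonneg (hτ (by simp) (by simp) (by omega))
    have hdefect : ‖Ξ (τ k) (τ (k + 1)) + Ξ (τ (k + 1)) (τ (k + 2)) - Ξ (τ k) (τ (k + 2))‖ ≤
        C * 2 ^ β * ((N : ℝ) + 1) ^ (-β) * L ^ β := by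
      calc _ ≤ C * (τ (k + 2) - τ k) ^ β :=
          hΞ.norm_add_sub_le (hmono 0 k (by omega) (by omega))
            (hmono k (k + 1) (by omega) (by omega)) (hmono (k + 1) (k + 2) (by omega) (by omega))
            (hmono (k + 2) (N + 2) (by omega) le_rfl)
        _ ≤ C * (2 * L / (N + 1)) ^ β := by
          have := hmono k (k + 2) (by omega) (by omega)
          gcongr
          push_cast at hgap
          exact hgap
        _ = _ := by
          have : 0 ≤ L := sub_nonneg.2 (hmono 0 (N + 2) (by omega) le_rfl)
          rw [Real.div_rpow (by positivity) (by positivity), Real.mul_rpow (by norm_num) this,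
            Real.rpow_neg (by positivity)]
          ring
    rw [riemannSum_removePoint Ξ τ hk, sum_range_succ]
    calc _ = ‖(riemannSum Ξ (removePoint τ (k + 1)) (N + 1) - Ξ (τ 0) (τ (N + 2))) +
          (Ξ (τ k) (τ (k + 1)) + Ξ (τ (k + 1)) (τ (k + 2)) - Ξ (τ k) (τ (k + 2)))‖ := by
          congr 1; abel
      _ ≤ _ := norm_add_le _ _
      _ ≤ _ := add_le_add hrec hdefect
      _ = _ := by ring

theorem norm_riemannSum_sub_le (hβ : 1 < β) {N : ℕ} (hN : 0 < N) {τ : ℕ → ℝ}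
    (hτ : StrictMonoOn τ (Set.Iic N)) (hΞ : HasDefectBound Ξ C β (τ 0) (τ N)) :
    ‖riemannSum Ξ τ N - Ξ (τ 0) (τ N)‖ ≤
      C * 2 ^ β * (∑' n : ℕ, ((n : ℝ) + 1) ^ (-β)) * (τ N - τ 0) ^ β := by
  obtain ⟨N, rfl⟩ : ∃ n, N = n + 1 := ⟨N - 1, by omega⟩
  have hCL := hΞ.mul_rpow_nonneg (hτ.monotoneOn (by simp) (by simp) (Nat.zero_le _))
  calc _ ≤ _ := norm_riemannSum_sub_le_sum (by linarith) hτ hΞ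
    _ = C * (τ (N + 1) - τ 0) ^ β * 2 ^ β * ∑ k ∈ range N, ((k : ℝ) + 1) ^ (-β) := by ring
    _ ≤ C * (τ (N + 1) - τ 0) ^ β * 2 ^ β * ∑' n : ℕ, ((n : ℝ) + 1) ^ (-β) := by
      gcongr
      exact (summable_add_one_rpow_neg hβ).sum_le_tsum _ fun _ _ => by positivity
    _ = _ := by ring

theorem norm_riemannSum_sub_riemannSum_le_of_refines (hβ : 1 < β) {ρ τ : ℕ → ℝ} {P N : ℕ}
    (hρ : StrictMonoOn ρ (Set.Iic P)) (hτ : StrictMonoOn τ (Set.Iic N))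
    (h0 : ρ 0 = τ 0) (hP : ρ P = τ N) (href : ∀ j ≤ N, ∃ i ≤ P, ρ i = τ j)
    (hΞ : HasDefectBound Ξ C β (τ 0) (τ N)) :
    ‖riemannSum Ξ ρ P - riemannSum Ξ τ N‖ ≤
      C * 2 ^ β * (∑' n : ℕ, ((n : ℝ) + 1) ^ (-β)) * riemannSum (fun u v => (v - u) ^ β) τ N := by
  choose! φ hφP hφ using href
  have hφmono : StrictMonoOn φ (Set.Iic N) := fun i hi j hj hij =>
    (hρ.lt_iff_lt (hφP i hi) (hφP j hj)).1 (by rw [hφ i hi, hφ j hj]; exact hτ hi hj hij)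
  have hφ0 : φ 0 = 0 := hρ.injOn (hφP 0 (Nat.zero_le N)) (Set.mem_Iic.2 (Nat.zero_le P))
    (by rw [hφ 0 (Nat.zero_le N), h0])
  have hφN : φ N = P := hρ.injOn (hφP N le_rfl) (Set.mem_Iic.2 le_rfl) (by rw [hφ N le_rfl, hP])
  have hφstep : ∀ j < N, φ j < φ (j + 1) := fun j hj =>
    hφmono (Set.mem_Iic.2 hj.le) (Set.mem_Iic.2 hj) j.lt_succ_self
  rw [← hφN, riemannSum_eq_sum_blocks Ξ ρ hφ0 fun j hj => (hφstep j hj).le, riemannSum,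
    riemannSum, mul_sum, ← sum_sub_distrib]
  refine (norm_sum_le _ _).trans (sum_le_sum fun j hj => ?_)
  rw [mem_range] at hj
  obtain ⟨m, hm⟩ : ∃ m, φ (j + 1) - φ j = m + 1 := ⟨_, (Nat.succ_pred_eq_of_pos
    (Nat.sub_pos_of_lt (hφstep j hj))).symm⟩
  have hφle : φ (j + 1) ≤ P := hφP (j + 1) hj
  have hσ : StrictMonoOn (fun i => ρ (φ j + i)) (Set.Iic (m + 1)) := fun a ha b hb hab =>
    hρ (Set.mem_Iic.2 (by simp at ha; omega)) (Set.mem_Iic.2 (by simp at hb; omega)) (by omega)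
  have hσ0 : ρ (φ j + 0) = τ j := by rw [add_zero, hφ j hj.le]
  have hσm : ρ (φ j + (m + 1)) = τ (j + 1) := by
    rw [← hm, Nat.add_sub_cancel' (hφstep j hj).le, hφ (j + 1) hj]
  have hmono : ∀ i ≤ N, τ 0 ≤ τ i ∧ τ i ≤ τ N := fun i hi =>
    ⟨hτ.monotoneOn (by simp) (Set.mem_Iic.2 hi) (Nat.zero_le i),
      hτ.monotoneOn (Set.mem_Iic.2 hi) (by simp) hi⟩
  have := norm_riemannSum_sub_le hβ m.succ_pos hσ
    (by rw [hσ0, hσm]; exact hΞ.mono (hmono j hj.le).1 (hmono (j + 1) hj).2)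
  rw [hσ0, hσm] at this
  rwa [hm]

theorem norm_riemannSum_sub_riemannSum_le (hβ : 1 < β) {τ σ : ℕ → ℝ} {N M : ℕ}
    (hτ : StrictMonoOn τ (Set.Iic N)) (hσ : StrictMonoOn σ (Set.Iic M))
    (h0 : τ 0 = σ 0) (hN : τ N = σ M) (hΞ : HasDefectBound Ξ C β (τ 0) (τ N)) :
    ‖riemannSum Ξ τ N - riemannSum Ξ σ M‖ ≤
      C * 2 ^ β * (∑' n : ℕ, ((n : ℝ) + 1) ^ (-β)) *
        (riemannSum (fun u v => (v - u) ^ β) τ N + riemannSum (fun u v => (v - u) ^ β) σ M) := by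
  obtain ⟨P, ρ, hρ, hρ0, hρP, hτρ, hσρ⟩ := exists_common_refinement hτ hσ h0 hN
  have hτ' := norm_riemannSum_sub_riemannSum_le_of_refines hβ hρ hτ hρ0 hρP hτρ hΞ
  have hσ' := norm_riemannSum_sub_riemannSum_le_of_refines hβ hρ hσ (hρ0.trans h0)
    (hρP.trans hN) hσρ (by rwa [← h0, ← hN])
  calc _ = ‖(riemannSum Ξ ρ P - riemannSum Ξ σ M) - (riemannSum Ξ ρ P - riemannSum Ξ τ N)‖ := by
        congr 1; abel
    _ ≤ _ := norm_sub_le _ _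
    _ ≤ _ := add_le_add hσ' hτ'
    _ = _ := by ring

end Defect

section SewingMap

variable {W : Type*} [NormedAddCommGroup W] {Ξ : ℝ → ℝ → W} {C β s t : ℝ}

def sewingMap (Ξ : ℝ → ℝ → W) (s t : ℝ) : W :=
  limUnder atTop fun m => riemannSum Ξ (dyadicPartition s t m) (2 ^ m)

theorem dist_riemannSum_dyadicPartition_succ_le (hΞ : HasDefectBound Ξ C β s t)
    (hst : s ≤ t) (m : ℕ) :
    dist (riemannSum Ξ (dyadicPartition s t m) (2 ^ m))
        (riemannSum Ξ (dyadicPartition s t (m + 1)) (2 ^ (m + 1))) ≤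
      C * (t - s) ^ β * ((2 : ℝ) ^ (1 - β)) ^ m := by
  set x := dyadicPartition s t m
  set y := dyadicPartition s t (m + 1)
  have hy : ∀ i, y (2 * i) = x i := dyadicPartition_succ_two_mul
  have hterm : ∀ i ∈ range (2 ^ m), ‖Ξ (y (2 * i)) (y (2 * i + 1)) +
      Ξ (y (2 * i + 1)) (y (2 * i + 2)) - Ξ (x i) (x (i + 1))‖ ≤ C * (x (i + 1) - x i) ^ β := by
    intro i hi
    rw [mem_range] at hi
    have hmono := monotone_dyadicPartition (m := m + 1) hst
    have hs : s ≤ y (2 * i) := (dyadicPartition_mem_Icc hst (by rw [pow_succ]; omega)).1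
    have ht : y (2 * i + 2) ≤ t := (dyadicPartition_mem_Icc hst (by rw [pow_succ]; omega)).2
    rw [← hy i, ← hy (i + 1)]
    exact hΞ.norm_add_sub_le hs (hmono (by omega)) (hmono (by omega)) ht
  rw [dist_comm, dist_eq_norm, pow_succ', riemannSum_two_mul, riemannSum, ← sum_sub_distrib]
  calc _ ≤ _ := norm_sum_le _ _
    _ ≤ ∑ i ∈ range (2 ^ m), C * (x (i + 1) - x i) ^ β := sum_le_sum hterm
    _ = _ := by
      rw [← mul_sum, mul_assoc]
      exact congrArg (C * ·) (riemannSum_rpow_dyadicPartition β hst)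

theorem tendsto_sewingMap [CompleteSpace W] (hβ : 1 < β) (hΞ : HasDefectBound Ξ C β s t)
    (hst : s ≤ t) :
    Tendsto (fun m => riemannSum Ξ (dyadicPartition s t m) (2 ^ m)) atTop
      (𝓝 (sewingMap Ξ s t)) :=
  (cauchySeq_of_le_geometric _ _ (two_rpow_one_sub_lt_one hβ)
    (dist_riemannSum_dyadicPartition_succ_le hΞ hst)).tendsto_limUnder

theorem norm_sewingMap_sub_le [CompleteSpace W] (hβ : 1 < β) (hΞ : HasDefectBound Ξ C β s t)
    (hst : s ≤ t) :
    ‖sewingMap Ξ s t - Ξ s t‖ ≤ C * (t - s) ^ β / (1 - (2 : ℝ) ^ (1 - β)) := by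
  have := dist_le_of_le_geometric_of_tendsto₀ _ _ (two_rpow_one_sub_lt_one hβ)
    (dist_riemannSum_dyadicPartition_succ_le hΞ hst) (tendsto_sewingMap hβ hΞ hst)
  rwa [riemannSum_dyadicPartition_zero, dist_comm, dist_eq_norm] at this

theorem sewingMap_self {a b : ℝ} (hΞ : HasDefectBound Ξ C β a b) (hβ : β ≠ 0) (ha : a ≤ s)
    (hb : s ≤ b) : sewingMap Ξ s s = 0 := by
  simp only [sewingMap, dyadicPartition, sub_self, zero_div, mul_zero, add_zero, riemannSum,
    hΞ.apply_self hβ ha hb, sum_const_zero]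
  exact tendsto_const_nhds.limUnder_eq

theorem norm_riemannSum_sub_sewingMap_le [CompleteSpace W] (hβ : 1 < β) {τ : ℕ → ℝ} {N : ℕ}
    (hN : 0 < N) (hτ : StrictMonoOn τ (Set.Iic N)) (hΞ : HasDefectBound Ξ C β (τ 0) (τ N)) :
    ‖riemannSum Ξ τ N - sewingMap Ξ (τ 0) (τ N)‖ ≤
      C * 2 ^ β * (∑' n : ℕ, ((n : ℝ) + 1) ^ (-β)) * riemannSum (fun u v => (v - u) ^ β) τ N := by
  have hst : τ 0 < τ N := hτ (by simp) (by simp) hN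
  have hcomp : ∀ m, ‖riemannSum Ξ τ N - riemannSum Ξ (dyadicPartition (τ 0) (τ N) m) (2 ^ m)‖ ≤
      C * 2 ^ β * (∑' n : ℕ, ((n : ℝ) + 1) ^ (-β)) * (riemannSum (fun u v => (v - u) ^ β) τ N +
        (τ N - τ 0) ^ β * ((2 : ℝ) ^ (1 - β)) ^ m) := fun m => by
    rw [← riemannSum_rpow_dyadicPartition β hst.le]
    exact norm_riemannSum_sub_riemannSum_le hβ hτ
      ((strictMono_dyadicPartition hst).strictMonoOn _)
      dyadicPartition_zero.symm dyadicPartition_two_pow.symm hΞ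
  refine le_of_tendsto_of_tendsto' ((tendsto_sewingMap hβ hΞ hst.le).const_sub _).norm ?_ hcomp
  have := tendsto_pow_atTop_nhds_zero_of_lt_one (by positivity) (two_rpow_one_sub_lt_one hβ)
  simpa using ((this.const_mul ((τ N - τ 0) ^ β)).const_add _).const_mul
    (C * 2 ^ β * (∑' n : ℕ, ((n : ℝ) + 1) ^ (-β)))

theorem sewingMap_add [CompleteSpace W] (hβ : 1 < β) {u : ℝ} (hΞ : HasDefectBound Ξ C β s t)
    (hsu : s ≤ u) (hut : u ≤ t) : sewingMap Ξ s u + sewingMap Ξ u t = sewingMap Ξ s t := by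
  rcases hsu.eq_or_lt with rfl | hsu
  · rw [sewingMap_self hΞ (by linarith) le_rfl hut, zero_add]
  rcases hut.eq_or_lt with rfl | hut
  · rw [sewingMap_self hΞ (by linarith) hsu.le le_rfl, add_zero]
  have hbound : ∀ m, ‖riemannSum Ξ (dyadicPartition s u m) (2 ^ m) +
      riemannSum Ξ (dyadicPartition u t m) (2 ^ m) - sewingMap Ξ s t‖ ≤
      C * 2 ^ β * (∑' n : ℕ, ((n : ℝ) + 1) ^ (-β)) *
        (((u - s) ^ β + (t - u) ^ β) * ((2 : ℝ) ^ (1 - β)) ^ m) := fun m => by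
    set τ := concatSeq (dyadicPartition s u m) (dyadicPartition u t m) (2 ^ m)
    have hjoin : dyadicPartition s u m (2 ^ m) = dyadicPartition u t m 0 := by simp
    have hτ0 : τ 0 = s := by simp [τ, concatSeq]
    have hτN : τ (2 ^ m + 2 ^ m) = t := by simp [τ, concatSeq]
    have hτ : StrictMonoOn τ (Set.Iic (2 ^ m + 2 ^ m)) := strictMonoOn_concatSeq
      ((strictMono_dyadicPartition hsu).strictMonoOn _)
      ((strictMono_dyadicPartition hut).strictMonoOn _) hjoin
    have := norm_riemannSum_sub_sewingMap_le hβ (by positivity) hτ (by rwa [hτ0, hτN])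
    rwa [riemannSum_concatSeq _ hjoin, riemannSum_concatSeq _ hjoin,
      riemannSum_rpow_dyadicPartition β hsu.le, riemannSum_rpow_dyadicPartition β hut.le, hτ0,
      hτN, ← add_mul] at this
  have hlim := tendsto_pow_atTop_nhds_zero_of_lt_one (by positivity) (two_rpow_one_sub_lt_one hβ)
  have := le_of_tendsto_of_tendsto' (((tendsto_sewingMap hβ (hΞ.mono le_rfl hut.le) hsu.le).add
    (tendsto_sewingMap hβ (hΞ.mono hsu.le le_rfl) hut.le)).sub_const _).norm
    ((hlim.const_mul _).const_mul _) hbound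
  rw [mul_zero, mul_zero, norm_le_zero_iff, sub_eq_zero] at this
  exact this

theorem sewingMap_sub_sewingMap [CompleteSpace W] (hβ : 1 < β) {a : ℝ}
    (hΞ : HasDefectBound Ξ C β a t) (has : a ≤ s) (hst : s ≤ t) :
    sewingMap Ξ a t - sewingMap Ξ a s = sewingMap Ξ s t := by
  rw [← sewingMap_add hβ hΞ has hst, add_sub_cancel_left]

theorem norm_sewingMap_sub_le_zeta [CompleteSpace W] (hβ : 1 < β)
    (hΞ : HasDefectBound Ξ C β s t) (hst : s ≤ t) :
    ‖sewingMap Ξ s t - Ξ s t‖ ≤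
      C * ((2 : ℝ) ^ β * ((∑' n : ℕ, ((n : ℝ) + 1) ^ (-β)) - 1) + 1) * (t - s) ^ β := by
  calc _ ≤ C * (t - s) ^ β * (1 - (2 : ℝ) ^ (1 - β))⁻¹ := norm_sewingMap_sub_le hβ hΞ hst
    _ ≤ C * (t - s) ^ β * ((2 : ℝ) ^ β * ((∑' n : ℕ, ((n : ℝ) + 1) ^ (-β)) - 1) + 1) :=
      mul_le_mul_of_nonneg_left ((inv_one_sub_two_rpow_le hβ).trans (le_add_of_nonneg_right
        zero_le_one)) (hΞ.mul_rpow_nonneg hst)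
    _ = _ := by ring

theorem exists_norm_riemannSum_sub_sewingMap_lt [CompleteSpace W] (hβ : 1 < β)
    (hΞ : HasDefectBound Ξ C β s t) {ε : ℝ} (hε : 0 < ε) :
    ∃ δ > 0, ∀ (N : ℕ) (τ : ℕ → ℝ), 0 < N → τ 0 = s → τ N = t →
      (∀ i < N, τ i < τ (i + 1)) → (∀ i < N, τ (i + 1) - τ i < δ) →
        ‖riemannSum Ξ τ N - sewingMap Ξ s t‖ < ε := by
  set K := C * 2 ^ β * ∑' n : ℕ, ((n : ℝ) + 1) ^ (-β)
  obtain ⟨δ, hδ, hlt⟩ := exists_pos_mul_rpow_lt (K * (t - s)) (sub_pos.2 hβ) hε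
  refine ⟨δ, hδ, fun N τ hN h0 hNt hstep hmesh => ?_⟩
  have hτ : StrictMonoOn τ (Set.Iic N) := strictMonoOn_Iic_of_lt_succ hstep
  subst h0 hNt
  have hK : 0 ≤ K := mul_nonneg (mul_nonneg (hΞ.nonneg (hτ (by simp) (by simp) hN))
    (by positivity)) (tsum_nonneg fun _ => by positivity)
  calc _ ≤ K * riemannSum (fun u v => (v - u) ^ β) τ N :=
        norm_riemannSum_sub_sewingMap_le hβ hN hτ hΞ
    _ ≤ K * (δ ^ (β - 1) * (τ N - τ 0)) := by
        gcongr
        exact riemannSum_rpow_le_of_mesh hβ.le hτ.monotoneOn fun i hi => (hmesh i hi).le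
    _ = K * (τ N - τ 0) * δ ^ (β - 1) := by ring
    _ < ε := hlt

end SewingMap

section Uniqueness

variable {W : Type*} [NormedAddCommGroup W] {a b β : ℝ}

theorem eq_of_norm_sub_le_rpow {f : ℝ → W} {C : ℝ} (hβ : 1 < β)
    (hf : ∀ s t, a ≤ s → s ≤ t → t ≤ b → ‖f t - f s‖ ≤ C * (t - s) ^ β) {t : ℝ} (ha : a ≤ t)
    (hb : t ≤ b) : f t = f a := by
  have hbound : ∀ m : ℕ, ‖f t - f a‖ ≤ C * ((t - a) ^ β * ((2 : ℝ) ^ (1 - β)) ^ m) := by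
    intro m
    set d := dyadicPartition a t m
    have hd : ∀ i ≤ 2 ^ m, a ≤ d i ∧ d i ≤ b := fun i hi =>
      ⟨(dyadicPartition_mem_Icc ha hi).1, (dyadicPartition_mem_Icc ha hi).2.trans hb⟩
    calc ‖f t - f a‖ = ‖∑ i ∈ range (2 ^ m), (f (d (i + 1)) - f (d i))‖ := by
          rw [sum_range_sub (fun i => f (d i))]
          simp [d]
      _ ≤ ∑ i ∈ range (2 ^ m), C * (d (i + 1) - d i) ^ β := by
          refine (norm_sum_le _ _).trans (sum_le_sum fun i hi => ?_)
          rw [mem_range] at hi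
          exact hf _ _ (hd i hi.le).1 (monotone_dyadicPartition ha i.le_succ) (hd (i + 1) hi).2
      _ = _ := by
          rw [← mul_sum]
          exact congrArg (C * ·) (riemannSum_rpow_dyadicPartition β ha)
  have hlim := ((tendsto_pow_atTop_nhds_zero_of_lt_one (by positivity)
    (two_rpow_one_sub_lt_one hβ)).const_mul ((t - a) ^ β)).const_mul C
  rw [mul_zero, mul_zero] at hlim
  exact sub_eq_zero.1 (norm_le_zero_iff.1 (ge_of_tendsto' hlim hbound))

theorem sub_eq_sub_of_norm_sub_sub_le {f g : ℝ → W} {Ξ : ℝ → ℝ → W} {D : ℝ} (hβ : 1 < β)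
    (hf : ∀ s t, a ≤ s → s ≤ t → t ≤ b → ‖f t - f s - Ξ s t‖ ≤ D * (t - s) ^ β)
    (hg : ∀ s t, a ≤ s → s ≤ t → t ≤ b → ‖g t - g s - Ξ s t‖ ≤ D * (t - s) ^ β) {t : ℝ}
    (ha : a ≤ t) (hb : t ≤ b) : f t - f a = g t - g a := by
  have := eq_of_norm_sub_le_rpow (f := f - g) (C := 2 * D) hβ (fun s t hs hst ht => by
    calc ‖(f - g) t - (f - g) s‖ = ‖(f t - f s - Ξ s t) - (g t - g s - Ξ s t)‖ := by
          simp only [Pi.sub_apply]; congr 1; abel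
      _ ≤ _ := norm_sub_le _ _
      _ ≤ D * (t - s) ^ β + D * (t - s) ^ β := add_le_add (hf s t hs hst ht) (hg s t hs hst ht)
      _ = _ := by ring) ha hb
  simp only [Pi.sub_apply] at this
  exact sub_eq_sub_iff_sub_eq_sub.1 this

end Uniqueness

end

theorem sewing_lemma_general
    {W : Type*} [NormedAddCommGroup W] [CompleteSpace W]
    (T : ℝ) (hT : 0 < T) (α β : ℝ) (hα1 : α ≤ 1) (hβ : 1 < β)
    (Ξ : ℝ → ℝ → W)
    (C1 : ℝ) (hC1 : ∀ s t, 0 ≤ s → s ≤ t → t ≤ T → ‖Ξ s t‖ ≤ C1 * (t - s) ^ α)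
    (Cδ : ℝ) (hCδ : ∀ s u t, 0 ≤ s → s ≤ u → u ≤ t → t ≤ T →
      ‖Ξ s t - Ξ s u - Ξ u t‖ ≤ Cδ * (t - s) ^ β) :
    ∃ I : ℝ → W,
      (I 0 = 0 ∧
      (∃ CI : ℝ, ∀ s t, 0 ≤ s → s ≤ t → t ≤ T → ‖I t - I s‖ ≤ CI * (t - s) ^ α) ∧
      (∀ s t, 0 ≤ s → s ≤ t → t ≤ T →
        ‖I t - I s - Ξ s t‖
          ≤ Cδ * ((2 : ℝ) ^ β * ((∑' n : ℕ, ((n : ℝ) + 1) ^ (-β)) - 1) + 1) * (t - s) ^ β) ∧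
      (∀ s t, 0 ≤ s → s ≤ t → t ≤ T → ∀ ε > 0, ∃ δ > 0,
        ∀ (N : ℕ) (τ : ℕ → ℝ), 0 < N → τ 0 = s → τ N = t →
          (∀ i < N, τ i < τ (i + 1)) → (∀ i < N, τ (i + 1) - τ i < δ) →
          ‖(∑ i ∈ Finset.range N, Ξ (τ i) (τ (i + 1))) - (I t - I s)‖ < ε)) ∧
      -- uniqueness on `[0,T]` of any path with these properties
      (∀ J : ℝ → W,
        (J 0 = 0 ∧
        (∃ CJ : ℝ, ∀ s t, 0 ≤ s → s ≤ t → t ≤ T → ‖J t - J s‖ ≤ CJ * (t - s) ^ α) ∧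
        (∀ s t, 0 ≤ s → s ≤ t → t ≤ T →
          ‖J t - J s - Ξ s t‖
            ≤ Cδ * ((2 : ℝ) ^ β * ((∑' n : ℕ, ((n : ℝ) + 1) ^ (-β)) - 1) + 1) * (t - s) ^ β)) →
        ∀ t, 0 ≤ t → t ≤ T → J t = I t) := by
  have hΞ : HasDefectBound Ξ Cδ β 0 T := hCδ
  have hincr : ∀ s t, 0 ≤ s → s ≤ t → t ≤ T →
      sewingMap Ξ 0 t - sewingMap Ξ 0 s = sewingMap Ξ s t := fun s t hs hst ht =>
    sewingMap_sub_sewingMap hβ (hΞ.mono le_rfl ht) hs hst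
  have hsew := fun s t hs hst ht => hincr s t hs hst ht ▸
    norm_sewingMap_sub_le_zeta hβ (hΞ.mono hs ht) hst
  have hI0 : sewingMap Ξ 0 0 = 0 := sewingMap_self hΞ (by linarith) le_rfl hT.le
  set K := (2 : ℝ) ^ β * ((∑' n : ℕ, ((n : ℝ) + 1) ^ (-β)) - 1) + 1
  refine ⟨sewingMap Ξ 0, ⟨hI0, ⟨Cδ * K * T ^ (β - α) + C1, fun s t hs hst ht => ?_⟩, hsew,
    fun s t hs hst ht ε hε => ?_⟩, fun J ⟨hJ0, _, hJ⟩ t ht htT => ?_⟩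
  · have hK : 0 ≤ K := add_nonneg (mul_nonneg (by positivity)
      (sub_nonneg.2 (one_le_tsum_add_one_rpow_neg hβ))) zero_le_one
    have := hΞ.nonneg hT
    calc _ ≤ ‖sewingMap Ξ 0 t - sewingMap Ξ 0 s - Ξ s t‖ + ‖Ξ s t‖ := norm_le_norm_sub_add _ _
      _ ≤ Cδ * K * (t - s) ^ β + C1 * (t - s) ^ α :=
        add_le_add (hsew s t hs hst ht) (hC1 s t hs hst ht)
      _ ≤ Cδ * K * (T ^ (β - α) * (t - s) ^ α) + C1 * (t - s) ^ α := by
        gcongr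
        exact rpow_le_rpow_sub_mul_rpow (sub_nonneg.2 hst) (by linarith) (by linarith) (by linarith)
      _ = _ := by ring
  · obtain ⟨δ, hδ, h⟩ := exists_norm_riemannSum_sub_sewingMap_lt hβ (hΞ.mono hs ht) hε
    refine ⟨δ, hδ, fun N τ hN h0 hNt hτ hmesh => ?_⟩
    rw [hincr s t hs hst ht]
    exact h N τ hN h0 hNt hτ hmesh
  · have := sub_eq_sub_of_norm_sub_sub_le hβ hJ hsew ht htT
    rwa [hJ0, hI0, sub_zero, sub_zero] at this

/-- Sewing lemma: given `Ξ` on the simplex over `[0,T]` with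
`Ξ t t = 0`, finite `α`-Hölder norm and finite `β`-Hölder norm of `δΞ`
(`0 < α ≤ 1 < β`), there is a unique (on `[0,T]`) `α`-Hölder path `I` with
`I 0 = 0` satisfying the sewing bound with constant
`‖δΞ‖_β [2^β (ζ(β) - 1) + 1]`; moreover its increments are limits of
Riemann-type sums over partitions with vanishing mesh. -/
theorem sewing_lemma
    {W : Type*} [NormedAddCommGroup W] [NormedSpace ℝ W] [CompleteSpace W]
    (T : ℝ) (hT : 0 < T) (α β : ℝ) (hα0 : 0 < α) (hα1 : α ≤ 1) (hβ : 1 < β)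
    (Ξ : ℝ → ℝ → W)
    (hdiag : ∀ t, Ξ t t = 0)
    (C1 : ℝ) (hC1 : ∀ s t, 0 ≤ s → s ≤ t → t ≤ T → ‖Ξ s t‖ ≤ C1 * (t - s) ^ α)
    (Cδ : ℝ) (hCδ : ∀ s u t, 0 ≤ s → s ≤ u → u ≤ t → t ≤ T →
      ‖Ξ s t - Ξ s u - Ξ u t‖ ≤ Cδ * (t - s) ^ β) :
    ∃ I : ℝ → W,
      (I 0 = 0 ∧
      (∃ CI : ℝ, ∀ s t, 0 ≤ s → s ≤ t → t ≤ T → ‖I t - I s‖ ≤ CI * (t - s) ^ α) ∧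
      (∀ s t, 0 ≤ s → s ≤ t → t ≤ T →
        ‖I t - I s - Ξ s t‖
          ≤ Cδ * ((2 : ℝ) ^ β * ((∑' n : ℕ, ((n : ℝ) + 1) ^ (-β)) - 1) + 1) * (t - s) ^ β) ∧
      (∀ s t, 0 ≤ s → s ≤ t → t ≤ T → ∀ ε > 0, ∃ δ > 0,
        ∀ (N : ℕ) (τ : ℕ → ℝ), 0 < N → τ 0 = s → τ N = t →
          (∀ i < N, τ i < τ (i + 1)) → (∀ i < N, τ (i + 1) - τ i < δ) →
          ‖(∑ i ∈ Finset.range N, Ξ (τ i) (τ (i + 1))) - (I t - I s)‖ < ε)) ∧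
      -- uniqueness on `[0,T]` of any path with these properties
      (∀ J : ℝ → W,
        (J 0 = 0 ∧
        (∃ CJ : ℝ, ∀ s t, 0 ≤ s → s ≤ t → t ≤ T → ‖J t - J s‖ ≤ CJ * (t - s) ^ α) ∧
        (∀ s t, 0 ≤ s → s ≤ t → t ≤ T →
          ‖J t - J s - Ξ s t‖
            ≤ Cδ * ((2 : ℝ) ^ β * ((∑' n : ℕ, ((n : ℝ) + 1) ^ (-β)) - 1) + 1) * (t - s) ^ β)) →
        ∀ t, 0 ≤ t → t ≤ T → J t = I t) :=
  sewing_lemma_general T hT α β hα1 hβ Ξ C1 hC1 Cδ hCδ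
end

section
/- In the setting of the Sewing lemma, for any partition $\mathcal{P}$ of $[s,t]$ one has the maximal inequality $\left|\sum_{[u,v]\in\mathcal{P}} \Xi_{u,v} - \Xi_{s,t}\right| \le \|\delta\Xi\|_{\beta}\,[2^{\beta}(\zeta(\beta)-1)+1]\,|t-s|^{\beta}$. -/
/-!
Young's point-removal argument. If a partition of `[s, t]` has `N + 1 ≥ 3` intervals, the `N`
gaps `τ (m + 2) - τ m` over interior points sum to at most `2 (t - s)`, so some interior point
`τ (m + 1)` can be removed at the cost of one `δΞ` over an interval of length `≤ 2 (t - s) / N`,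
i.e. at most `‖δΞ‖_β 2^β N^{-β} (t - s)^β`. Removing points one at a time down to two intervals,
and the last one at cost `‖δΞ‖_β (t - s)^β`, bounds the error by
`‖δΞ‖_β (1 + 2^β ∑_{k=2}^{N-1} k^{-β}) (t - s)^β`, and `∑_{k ≥ 2} k^{-β} = ζ(β) - 1`.
-/

open Finset

theorem sum_Ico_le_tsum_nat_add {α : Type*} [AddCommGroup α] [PartialOrder α]
    [IsOrderedAddMonoid α] [TopologicalSpace α] [IsTopologicalAddGroup α] [OrderClosedTopology α]
    {f : ℕ → α} (hf : Summable f) (hf0 : ∀ k, 0 ≤ f k) (m n : ℕ) :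
    ∑ k ∈ Ico m n, f k ≤ ∑' k, f (k + m) := by
  rw [sum_Ico_eq_sum_range]
  simp_rw [add_comm m]
  exact ((summable_nat_add_iff m).2 hf).sum_le_tsum _ fun k _ => hf0 (k + m)

theorem sum_Ico_two_rpow_neg_le_tsum_sub_one {β : ℝ} (hβ : 1 < β) (N : ℕ) :
    ∑ k ∈ Ico 2 N, (k : ℝ) ^ (-β) ≤ ∑' n : ℕ, ((n : ℝ) + 1) ^ (-β) - 1 := by
  have hf : Summable fun k : ℕ => (k : ℝ) ^ (-β) := Real.summable_nat_rpow.2 (by linarith)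
  have htail : ∑' n : ℕ, ((n : ℝ) + 1) ^ (-β) - 1 = ∑' k : ℕ, ((k + 2 : ℕ) : ℝ) ^ (-β) := by
    have h := ((summable_nat_add_iff 1).2 hf).sum_add_tsum_nat_add 1
    push_cast at h ⊢
    norm_num [add_assoc] at h
    linarith
  rw [htail]
  exact sum_Ico_le_tsum_nat_add hf (fun k => by positivity) 2 N

theorem exists_sub_le_two_mul_div {τ : ℕ → ℝ} {N : ℕ} (hN : 0 < N)
    (hτ : MonotoneOn τ (Set.Iic (N + 1))) :
    ∃ m < N, τ (m + 2) - τ m ≤ 2 * (τ (N + 1) - τ 0) / N := by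
  have htelescope : ∑ m ∈ range N, (τ (m + 2) - τ m) = (τ (N + 1) - τ 1) + (τ N - τ 0) := by
    rw [← sum_range_sub (fun i => τ (i + 1)), ← sum_range_sub τ, ← sum_add_distrib]
    exact sum_congr rfl fun _ _ => by ring
  have hsum : ∑ m ∈ range N, (τ (m + 2) - τ m) ≤ ∑ _m ∈ range N, 2 * (τ (N + 1) - τ 0) / N := by
    have h01 : τ 0 ≤ τ 1 := hτ (by simp) (by simp) zero_le_one
    have hN1 : τ N ≤ τ (N + 1) := hτ (by simp) (by simp) N.le_succ
    rw [htelescope, sum_const, card_range, nsmul_eq_mul, mul_div_cancel₀ _ (by positivity)]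
    linarith
  obtain ⟨m, hm, hgap⟩ := exists_le_of_sum_le (nonempty_range_iff.2 hN.ne') hsum
  exact ⟨m, mem_range.1 hm, hgap⟩

def natSuccAbove (p i : ℕ) : ℕ := if i < p then i else i + 1

theorem natSuccAbove_monotone (p : ℕ) : Monotone (natSuccAbove p) := by
  intro i j hij
  unfold natSuccAbove
  split_ifs <;> omega

theorem natSuccAbove_le_add_one (p i : ℕ) : natSuccAbove p i ≤ i + 1 := by
  unfold natSuccAbove
  split_ifs <;> omega

theorem sum_range_succ_eq_sum_natSuccAbove {M : Type*} [AddCommGroup M] (f : ℕ → ℕ → M)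
    {m N : ℕ} (hm : m < N) :
    ∑ i ∈ range (N + 1), f i (i + 1) =
      ∑ i ∈ range N, f (natSuccAbove (m + 1) i) (natSuccAbove (m + 1) (i + 1)) +
        (f m (m + 1) + f (m + 1) (m + 2) - f m (m + 2)) := by
  induction N, hm using Nat.le_induction with
  | base =>
    have hlow : ∀ i ∈ range m, f (natSuccAbove (m + 1) i) (natSuccAbove (m + 1) (i + 1)) =
        f i (i + 1) := fun i hi => by
      simp [natSuccAbove, mem_range.1 hi, (mem_range.1 hi).trans m.lt_succ_self]
    have hmid : natSuccAbove (m + 1) m = m ∧ natSuccAbove (m + 1) (m + 1) = m + 2 := by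
      simp only [natSuccAbove]
      constructor <;> split_ifs <;> omega
    rw [sum_range_succ, sum_range_succ, sum_range_succ, sum_congr rfl hlow, hmid.1, hmid.2]
    abel
  | succ N hN ih =>
    have hlast : natSuccAbove (m + 1) N = N + 1 ∧ natSuccAbove (m + 1) (N + 1) = N + 2 := by
      simp only [natSuccAbove]
      constructor <;> split_ifs <;> omega
    rw [sum_range_succ, ih, sum_range_succ _ N, hlast.1, hlast.2]
    abel

section
variable {W : Type*} [SeminormedAddCommGroup W] {Ξ : ℝ → ℝ → W} {C β s t : ℝ}

theorem norm_sum_sub_le_norm_sum_natSuccAbove_add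
    (hδ : ∀ u v w, s ≤ u → u ≤ v → v ≤ w → w ≤ t → ‖Ξ u w - Ξ u v - Ξ v w‖ ≤ C * (w - u) ^ β)
    {τ : ℕ → ℝ} {m N : ℕ} (hm : m < N) (hτ : MonotoneOn τ (Set.Iic (N + 1)))
    (hτ0 : τ 0 = s) (hτN : τ (N + 1) = t) :
    ‖∑ i ∈ range (N + 1), Ξ (τ i) (τ (i + 1)) - Ξ s t‖ ≤
      ‖∑ i ∈ range N, Ξ (τ (natSuccAbove (m + 1) i)) (τ (natSuccAbove (m + 1) (i + 1))) - Ξ s t‖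
        + C * (τ (m + 2) - τ m) ^ β := by
  have hle : ∀ i j, i ≤ j → j ≤ N + 1 → τ i ≤ τ j := fun i j hij hj =>
    hτ (Set.mem_Iic.2 (hij.trans hj)) (Set.mem_Iic.2 hj) hij
  rw [sum_range_succ_eq_sum_natSuccAbove (fun i j => Ξ (τ i) (τ j)) hm]
  calc _ = ‖(∑ i ∈ range N, Ξ (τ (natSuccAbove (m + 1) i)) (τ (natSuccAbove (m + 1) (i + 1)))
              - Ξ s t) -
            (Ξ (τ m) (τ (m + 2)) - Ξ (τ m) (τ (m + 1)) - Ξ (τ (m + 1)) (τ (m + 2)))‖ := by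
        congr 1; abel
    _ ≤ _ := norm_sub_le _ _
    _ ≤ _ := by
      gcongr
      exact hδ _ _ _ (hτ0 ▸ hle 0 m (by omega) (by omega)) (hle _ _ (by omega) (by omega))
        (hle _ _ (by omega) (by omega)) (hτN ▸ hle _ _ (by omega) le_rfl)

theorem norm_sum_sub_le_of_monotoneOn (hC : 0 ≤ C) (hβ : 0 ≤ β)
    (hδ : ∀ u v w, s ≤ u → u ≤ v → v ≤ w → w ≤ t → ‖Ξ u w - Ξ u v - Ξ v w‖ ≤ C * (w - u) ^ β)
    {N : ℕ} (hN : 0 < N) {τ : ℕ → ℝ} (hτ : MonotoneOn τ (Set.Iic N))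
    (hτ0 : τ 0 = s) (hτN : τ N = t) :
    ‖∑ i ∈ range N, Ξ (τ i) (τ (i + 1)) - Ξ s t‖ ≤
      C * (2 ^ β * ∑ k ∈ Ico 2 N, (k : ℝ) ^ (-β) + 1) * (t - s) ^ β := by
  have hst : s ≤ t := hτ0 ▸ hτN ▸ hτ (Set.mem_Iic.2 N.zero_le) Set.self_mem_Iic N.zero_le
  induction N, hN using Nat.le_induction generalizing τ with
  | base =>
    simp only [Nat.succ_eq_add_one, zero_add, sum_range_one, hτ0, hτN, sub_self, norm_zero]
    positivity
  | succ N hN ih =>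
    obtain ⟨m, hmN, hgap⟩ := exists_sub_le_two_mul_div hN hτ
    have hremove := norm_sum_sub_le_norm_sum_natSuccAbove_add hδ hmN hτ hτ0 hτN
    rcases hN.eq_or_lt with rfl | hN2
    · -- removing the only interior point leaves the single interval `[s, t]`, with zero error
      obtain rfl : m = 0 := by omega
      simpa [natSuccAbove, hτ0, hτN] using hremove
    · have hτ' : MonotoneOn (τ ∘ natSuccAbove (m + 1)) (Set.Iic N) :=
        hτ.comp ((natSuccAbove_monotone _).monotoneOn _) fun i hi =>
          (natSuccAbove_le_add_one _ i).trans (Nat.succ_le_succ hi)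
      have hτ'0 : τ (natSuccAbove (m + 1) 0) = s := by simp [natSuccAbove, hτ0]
      have hτ'N : τ (natSuccAbove (m + 1) N) = t := by
        simp [natSuccAbove, hτN, show ¬ N < m + 1 by omega]
      have hgap0 : 0 ≤ τ (m + 2) - τ m :=
        sub_nonneg.2 (hτ (Set.mem_Iic.2 (by omega)) (Set.mem_Iic.2 (by omega)) (by omega))
      rw [hτ0, hτN] at hgap
      calc _ ≤ _ := hremove
        _ ≤ C * (2 ^ β * ∑ k ∈ Ico 2 N, (k : ℝ) ^ (-β) + 1) * (t - s) ^ β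
            + C * (2 * (t - s) / N) ^ β := by
          gcongr
          exact ih hτ' hτ'0 hτ'N
        _ = _ := by
          rw [sum_Ico_succ_top hN2, Real.div_rpow (by linarith) (by positivity),
            Real.mul_rpow zero_le_two (by linarith), Real.rpow_neg (Nat.cast_nonneg N)]
          ring

end

theorem sewing_maximal_inequality_general
    {W : Type*} [NormedAddCommGroup W]
    (T : ℝ) (β : ℝ) (hβ : 1 < β)
    (Ξ : ℝ → ℝ → W)
    (Cδ : ℝ) (hCδ : ∀ s u t, 0 ≤ s → s ≤ u → u ≤ t → t ≤ T →
      ‖Ξ s t - Ξ s u - Ξ u t‖ ≤ Cδ * (t - s) ^ β)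
    (s t : ℝ) (hs : 0 ≤ s) (htT : t ≤ T)
    (N : ℕ) (hN : 0 < N) (τ : ℕ → ℝ)
    (hτ0 : τ 0 = s) (hτN : τ N = t) (hmono : ∀ i < N, τ i < τ (i + 1)) :
    ‖(∑ i ∈ Finset.range N, Ξ (τ i) (τ (i + 1))) - Ξ s t‖
      ≤ Cδ * ((2 : ℝ) ^ β * ((∑' n : ℕ, ((n : ℝ) + 1) ^ (-β)) - 1) + 1) * (t - s) ^ β := by
  have hτ : StrictMonoOn τ (Set.Iic N) := strictMonoOn_Iic_of_lt_succ hmono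
  have hst : s < t := hτ0 ▸ hτN ▸ hτ (Set.mem_Iic.2 N.zero_le) Set.self_mem_Iic hN
  have hδ : ∀ u v w, s ≤ u → u ≤ v → v ≤ w → w ≤ t →
      ‖Ξ u w - Ξ u v - Ξ v w‖ ≤ Cδ * (w - u) ^ β :=
    fun u v w hsu huv hvw hwt => hCδ u v w (hs.trans hsu) huv hvw (hwt.trans htT)
  have hC : 0 ≤ Cδ := nonneg_of_mul_nonneg_left
    ((norm_nonneg _).trans (hδ s s t le_rfl le_rfl hst.le le_rfl))
    (Real.rpow_pos_of_pos (sub_pos.2 hst) β)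
  calc _ ≤ Cδ * (2 ^ β * ∑ k ∈ Ico 2 N, (k : ℝ) ^ (-β) + 1) * (t - s) ^ β :=
        norm_sum_sub_le_of_monotoneOn hC (by linarith) hδ hN hτ.monotoneOn hτ0 hτN
    _ ≤ _ := by
      gcongr
      exact sum_Ico_two_rpow_neg_le_tsum_sub_one hβ N

/-- Maximal inequality in the Sewing lemma: for any partition
`s = τ 0 < τ 1 < ⋯ < τ N = t` of `[s,t] ⊆ [0,T]`,
`‖∑ Ξ_{τ i, τ (i+1)} - Ξ_{s,t}‖ ≤ ‖δΞ‖_β [2^β (ζ(β) - 1) + 1] (t-s)^β`. -/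
theorem sewing_maximal_inequality
    {W : Type*} [NormedAddCommGroup W] [NormedSpace ℝ W]
    (T : ℝ) (hT : 0 < T) (β : ℝ) (hβ : 1 < β)
    (Ξ : ℝ → ℝ → W)
    (hdiag : ∀ t, Ξ t t = 0)
    (Cδ : ℝ) (hCδ : ∀ s u t, 0 ≤ s → s ≤ u → u ≤ t → t ≤ T →
      ‖Ξ s t - Ξ s u - Ξ u t‖ ≤ Cδ * (t - s) ^ β)
    (s t : ℝ) (hs : 0 ≤ s) (hst : s ≤ t) (htT : t ≤ T)
    (N : ℕ) (hN : 0 < N) (τ : ℕ → ℝ)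
    (hτ0 : τ 0 = s) (hτN : τ N = t) (hmono : ∀ i < N, τ i < τ (i + 1)) :
    ‖(∑ i ∈ Finset.range N, Ξ (τ i) (τ (i + 1))) - Ξ s t‖
      ≤ Cδ * ((2 : ℝ) ^ β * ((∑' n : ℕ, ((n : ℝ) + 1) ^ (-β)) - 1) + 1) * (t - s) ^ β :=
  sewing_maximal_inequality_general T β hβ Ξ Cδ hCδ s t hs htT N hN τ hτ0 hτN hmono
end
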